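/- Let R be a right rule with premises {Γ, φ̄_i ⇒ ψ̄_i}_{i∈I} and conclusion Γ, θ̄ ⇒ η̄, where I is a finite index set, the φ̄_i, θ̄ are finite multisets of formulas, the ψ̄_i and η̄ contain at most one formula, and Γ is a multiset variable. Define Ax_R := (⋀_{i∈I}(⋀φ̄_i → ⋁ψ̄_i) ∧ ⋀θ̄) → ⋁η̄. Then: (i) the sequent (⇒ Ax_R) is provable in LJ extended by the rule R (closed under all substitutions of formulas for atoms and multisets for Γ); (ii) for every substitution σ of formulas for atoms and every multiset Γ, the sequent Γ, σ(θ̄) ⇒ σ(η̄) is derivable in LJ extended by the initial sequents (⇒ σ'(Ax_R)) for all substitutions σ', from the assumptions {Γ, σ(φ̄_i) ⇒ σ(ψ̄_i)}_{i∈I}; (iii) Ax_R is a constructive formula if and only if every formula in every φ̄_i is basic, every formula in every ψ̄_i and in θ̄ is almost positive, and every formula in η̄ is constructive. -/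

import Mathlib

set_option autoImplicit false

namespace UPT

/-- Modal formulas over atoms of type `α` (the language `ℒ = {∧,∨,→,⊤,⊥,□,◇}`). -/
inductive Fml (α : Type) : Type where
  | atom : α → Fml α
  | top  : Fml α
  | bot  : Fml α
  | and  : Fml α → Fml α → Fml α
  | or   : Fml α → Fml α → Fml α
  | imp  : Fml α → Fml α → Fml α
  | box  : Fml α → Fml α
  | dia  : Fml α → Fml α
deriving DecidableEq

variable {α β : Type}

/-- Simultaneous substitution of formulas for atoms. -/
def Fml.subst (σ : β → Fml α) : Fml β → Fml α
  | .atom b  => σ b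
  | .top     => .top
  | .bot     => .bot
  | .and A B => .and (A.subst σ) (B.subst σ)
  | .or A B  => .or (A.subst σ) (B.subst σ)
  | .imp A B => .imp (A.subst σ) (B.subst σ)
  | .box A   => .box (A.subst σ)
  | .dia A   => .dia (A.subst σ)

/-- A sequent: a finite multiset antecedent together with a succedent
containing at most one formula. -/
abbrev Seq (α : Type) : Type := Multiset (Fml α) × Option (Fml α)

/-- A rule set relates a (finite) list of premise sequents to a conclusion sequent. -/
abbrev RuleSet (α : Type) : Type := List (Seq α) → Seq α → Prop

/-- The axioms and rules of the single-conclusion sequent calculus `LJ`, stated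
schematically: they are closed under substituting arbitrary formulas for atoms
and arbitrary multisets (resp. succedents) for the context variables. -/
inductive LJRule : List (Seq α) → Seq α → Prop where
  | id (Γ : Multiset (Fml α)) (A : Fml α) : LJRule [] (A ::ₘ Γ, some A)
  | botL (Γ : Multiset (Fml α)) (Δ : Option (Fml α)) : LJRule [] (.bot ::ₘ Γ, Δ)
  | topR (Γ : Multiset (Fml α)) : LJRule [] (Γ, some .top)
  | wL (A : Fml α) (Γ : Multiset (Fml α)) (Δ : Option (Fml α)) :
      LJRule [(Γ, Δ)] (A ::ₘ Γ, Δ)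
  | wR (A : Fml α) (Γ : Multiset (Fml α)) : LJRule [(Γ, none)] (Γ, some A)
  | cL (A : Fml α) (Γ : Multiset (Fml α)) (Δ : Option (Fml α)) :
      LJRule [(A ::ₘ A ::ₘ Γ, Δ)] (A ::ₘ Γ, Δ)
  | cut (A : Fml α) (Γ : Multiset (Fml α)) (Δ : Option (Fml α)) :
      LJRule [(Γ, some A), (A ::ₘ Γ, Δ)] (Γ, Δ)
  | andL₁ (A B : Fml α) (Γ : Multiset (Fml α)) (Δ : Option (Fml α)) :
      LJRule [(A ::ₘ Γ, Δ)] (.and A B ::ₘ Γ, Δ)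
  | andL₂ (A B : Fml α) (Γ : Multiset (Fml α)) (Δ : Option (Fml α)) :
      LJRule [(B ::ₘ Γ, Δ)] (.and A B ::ₘ Γ, Δ)
  | andR (A B : Fml α) (Γ : Multiset (Fml α)) :
      LJRule [(Γ, some A), (Γ, some B)] (Γ, some (.and A B))
  | orL (A B : Fml α) (Γ : Multiset (Fml α)) (Δ : Option (Fml α)) :
      LJRule [(A ::ₘ Γ, Δ), (B ::ₘ Γ, Δ)] (.or A B ::ₘ Γ, Δ)
  | orR₁ (A B : Fml α) (Γ : Multiset (Fml α)) : LJRule [(Γ, some A)] (Γ, some (.or A B))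
  | orR₂ (A B : Fml α) (Γ : Multiset (Fml α)) : LJRule [(Γ, some B)] (Γ, some (.or A B))
  | impL (A B : Fml α) (Γ : Multiset (Fml α)) (Δ : Option (Fml α)) :
      LJRule [(Γ, some A), (B ::ₘ Γ, Δ)] (.imp A B ::ₘ Γ, Δ)
  | impR (A B : Fml α) (Γ : Multiset (Fml α)) :
      LJRule [(A ::ₘ Γ, some B)] (Γ, some (.imp A B))

/-- The rule `K_□`: from `Γ ⇒ A` infer `□Γ ⇒ □A`. -/
inductive KBoxRule : List (Seq α) → Seq α → Prop where
  | mk (Γ : Multiset (Fml α)) (A : Fml α) :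
      KBoxRule [(Γ, some A)] (Γ.map Fml.box, some (.box A))

/-- The rule `K_◇`: from `Γ, A ⇒ B` infer `□Γ, ◇A ⇒ ◇B`. -/
inductive KDiaRule : List (Seq α) → Seq α → Prop where
  | mk (Γ : Multiset (Fml α)) (A B : Fml α) :
      KDiaRule [(A ::ₘ Γ, some B)] (.dia A ::ₘ Γ.map Fml.box, some (.dia B))

/-- The rule `◇L`: from `Γ, A ⇒ B` infer `Γ, ◇A ⇒ ◇B`. -/
inductive DiaLRule : List (Seq α) → Seq α → Prop where
  | mk (Γ : Multiset (Fml α)) (A B : Fml α) :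
      DiaLRule [(A ::ₘ Γ, some B)] (.dia A ::ₘ Γ, some (.dia B))

/-- Adding a set `Ax` of axioms to a calculus: the initial sequents `⇒ σ(A)`
for every substitution instance `σ(A)` of every `A ∈ Ax`. -/
def axRule (Ax : Fml α → Prop) : RuleSet α := fun ps c =>
  ps = [] ∧ ∃ (A : Fml α) (σ : α → Fml α), Ax A ∧ c = ((0 : Multiset (Fml α)), some (A.subst σ))

/-- Using a set of sequents as additional initial sequents (assumptions). -/
def hypRule (H : Set (Seq α)) : RuleSet α := fun ps c => ps = [] ∧ c ∈ H

/-- The sequent calculus `LJ+Ax`. -/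
def LJSys (Ax : Fml α → Prop) : RuleSet α := fun ps c => LJRule ps c ∨ axRule Ax ps c

/-- The sequent calculus `CK+Ax = LJ + K_□ + K_◇ + Ax`. -/
def CKSys (Ax : Fml α → Prop) : RuleSet α := fun ps c =>
  LJRule ps c ∨ KBoxRule ps c ∨ KDiaRule ps c ∨ axRule Ax ps c

/-- The sequent calculus `CK_□+Ax = LJ + K_□ + Ax`. -/
def CKBoxSys (Ax : Fml α → Prop) : RuleSet α := fun ps c =>
  LJRule ps c ∨ KBoxRule ps c ∨ axRule Ax ps c

/-- The sequent calculus `BLL+Ax = LJ + ◇L + Ax`. -/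
def BLLSys (Ax : Fml α → Prop) : RuleSet α := fun ps c =>
  LJRule ps c ∨ DiaLRule ps c ∨ axRule Ax ps c

/-- Provability of a sequent in the calculus generated by a rule set. -/
inductive Derives (R : RuleSet α) : Multiset (Fml α) → Option (Fml α) → Prop where
  | step {ps : List (Seq α)} {c : Seq α} (hr : R ps c)
      (hp : ∀ p ∈ ps, Derives R p.1 p.2) : Derives R c.1 c.2

/-- Basic formulas: generated from atoms, `⊤`, `⊥` by `∧`, `∨`, `◇`. -/
inductive Basic : Fml α → Prop where
  | atom (a : α) : Basic (.atom a)
  | top : Basic (.top : Fml α)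
  | bot : Basic (.bot : Fml α)
  | and {A B : Fml α} : Basic A → Basic B → Basic (.and A B)
  | or {A B : Fml α} : Basic A → Basic B → Basic (.or A B)
  | dia {A : Fml α} : Basic A → Basic (.dia A)

/-- Almost positive formulas: generated from basic formulas by `∧`, `∨`, `□`, `◇`
and implications `A → B` with `A` basic and `B` almost positive. -/
inductive AlmostPos : Fml α → Prop where
  | basic {A : Fml α} : Basic A → AlmostPos A
  | and {A B : Fml α} : AlmostPos A → AlmostPos B → AlmostPos (.and A B)
  | or {A B : Fml α} : AlmostPos A → AlmostPos B → AlmostPos (.or A B)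
  | box {A : Fml α} : AlmostPos A → AlmostPos (.box A)
  | dia {A : Fml α} : AlmostPos A → AlmostPos (.dia A)
  | imp {A B : Fml α} : Basic A → AlmostPos B → AlmostPos (.imp A B)

/-- Constructive formulas: generated from basic formulas by `∧`, `□` and
implications `A → B` with `A` almost positive and `B` constructive. -/
inductive Constructive : Fml α → Prop where
  | basic {A : Fml α} : Basic A → Constructive A
  | and {A B : Fml α} : Constructive A → Constructive B → Constructive (.and A B)
  | box {A : Fml α} : Constructive A → Constructive (.box A)
  | imp {A B : Fml α} : AlmostPos A → Constructive B → Constructive (.imp A B)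

/-- Harrop formulas: atoms, `⊥`, `⊤`, closed under `∧`, `□`, and implications
`A → B` with `A` arbitrary and `B` Harrop. -/
inductive Harrop : Fml α → Prop where
  | atom (a : α) : Harrop (.atom a)
  | top : Harrop (.top : Fml α)
  | bot : Harrop (.bot : Fml α)
  | and {A B : Fml α} : Harrop A → Harrop B → Harrop (.and A B)
  | box {A : Fml α} : Harrop A → Harrop (.box A)
  | imp (A : Fml α) {B : Fml α} : Harrop B → Harrop (.imp A B)

/-- Conjunction of a list of formulas (`⋀∅ = ⊤`). -/
def conj : List (Fml α) → Fml α
  | [] => .top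
  | [A] => A
  | A :: B :: l => .and A (conj (B :: l))

/-- Disjunction of a list of formulas (`⋁∅ = ⊥`). -/
def disj : List (Fml α) → Fml α
  | [] => .bot
  | [A] => A
  | A :: B :: l => .or A (disj (B :: l))

/-- Disjunction of a succedent (at most one formula; `⋁∅ = ⊥`). -/
def odisj : Option (Fml α) → Fml α
  | none => .bot
  | some A => A

/-- The multiset `{A_i → B_i}_{i ∈ I}` of implications of an indexed family. -/
def imps (AB : List (Fml α × Fml α)) : Multiset (Fml α) :=
  ↑(AB.map fun p => Fml.imp p.1 p.2)

/-- The conjunction `⋀_{i∈I} (A_i → B_i)` of an indexed family of implications. -/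
def impConj (AB : List (Fml α × Fml α)) : Fml α :=
  conj (AB.map fun p => Fml.imp p.1 p.2)

/-- Truth in the one-node *irreflexive* frame `𝒦ᵢ` under a Boolean valuation:
`□A` is always true and `◇A` is always false; the propositional connectives
are evaluated classically. -/
def evalI (v : α → Bool) : Fml α → Bool
  | .atom a  => v a
  | .top     => true
  | .bot     => false
  | .and A B => evalI v A && evalI v B
  | .or A B  => evalI v A || evalI v B
  | .imp A B => !evalI v A || evalI v B
  | .box _   => true
  | .dia _   => false

/-- Truth in the one-node *reflexive* frame `𝒦ᵣ` under a Boolean valuation: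
`□A` and `◇A` take the value of `A`. -/
def evalR (v : α → Bool) : Fml α → Bool
  | .atom a  => v a
  | .top     => true
  | .bot     => false
  | .and A B => evalR v A && evalR v B
  | .or A B  => evalR v A || evalR v B
  | .imp A B => !evalR v A || evalR v B
  | .box A   => evalR v A
  | .dia A   => evalR v A

/-- Validity of a sequent with respect to a one-node semantics: under every
valuation, if all formulas of the antecedent are true then so is the succedent. -/
def SeqValid (ev : (α → Bool) → Fml α → Bool) (Γ : Multiset (Fml α)) (Δ : Option (Fml α)) :
    Prop :=
  ∀ v : α → Bool, (∀ A ∈ Γ, ev v A = true) → ∃ B ∈ Δ, ev v B = true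

/-- `CK+Ax` is T-free: every provable sequent is valid in the irreflexive node frame. -/
def TFree (Ax : Fml α → Prop) : Prop :=
  ∀ (Γ : Multiset (Fml α)) (Δ : Option (Fml α)), Derives (CKSys Ax) Γ Δ → SeqValid evalI Γ Δ

/-- `CK+Ax` is T-full: every provable sequent is valid in the reflexive node
frame and the calculus proves `⇒ □p → p` and `⇒ p → ◇p`. -/
def TFull (Ax : Fml α → Prop) : Prop :=
  (∀ (Γ : Multiset (Fml α)) (Δ : Option (Fml α)), Derives (CKSys Ax) Γ Δ → SeqValid evalR Γ Δ) ∧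
  (∀ a : α, Derives (CKSys Ax) 0 (some (.imp (.box (.atom a)) (.atom a)))) ∧
  (∀ a : α, Derives (CKSys Ax) 0 (some (.imp (.atom a) (.dia (.atom a)))))

/-- Classical validity of a (modality-free) sequent: `⋀Γ → ⋁Δ` is true under
every Boolean valuation of the atoms. -/
def ClValid (Γ : Multiset (Fml α)) (Δ : Option (Fml α)) : Prop :=
  ∀ v : α → Bool, (∀ A ∈ Γ, evalI v A = true) → ∃ B ∈ Δ, evalI v B = true

/-- Nonempty conjunctions of atoms. -/
inductive AtomConj : Fml α → Prop where
  | single (a : α) : AtomConj (.atom a)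
  | and {A B : Fml α} : AtomConj A → AtomConj B → AtomConj (.and A B)

/-- Implicational Horn formulas: `⊥`, atoms, and implications `⋀Q → r` with `Q`
a nonempty multiset of atoms and `r` an atom or `⊥`. -/
inductive ImpHorn : Fml α → Prop where
  | bot : ImpHorn (.bot : Fml α)
  | atom (a : α) : ImpHorn (.atom a)
  | impAtom {A : Fml α} (hA : AtomConj A) (a : α) : ImpHorn (.imp A (.atom a))
  | impBot {A : Fml α} (hA : AtomConj A) : ImpHorn (.imp A .bot)

/-- Formulas of the form `◇^n p` with `p` an atom and `n ≥ 0`. -/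
inductive DiaPowAtom : Fml α → Prop where
  | atom (a : α) : DiaPowAtom (.atom a)
  | dia {A : Fml α} : DiaPowAtom A → DiaPowAtom (.dia A)

/-- Nonempty conjunctions `⋀_{i=1}^k ◇^{n_i} p_i` of formulas `◇^{n_i} p_i`. -/
inductive DiaConj : Fml α → Prop where
  | single {A : Fml α} : DiaPowAtom A → DiaConj A
  | and {A B : Fml α} : DiaConj A → DiaConj B → DiaConj (.and A B)

/-- Modal Horn formulas: `⊥` and atoms, closed under `□` and under implications
`A → B` with `A = ⋀_{i=1}^k ◇^{n_i} p_i` and `B` modal Horn. -/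
inductive ModalHorn : Fml α → Prop where
  | bot : ModalHorn (.bot : Fml α)
  | atom (a : α) : ModalHorn (.atom a)
  | box {A : Fml α} : ModalHorn A → ModalHorn (.box A)
  | imp {A B : Fml α} : DiaConj A → ModalHorn B → ModalHorn (.imp A B)

/-- The predicate "all atoms of the formula satisfy `P`". -/
def Fml.AtomsIn (P : α → Prop) : Fml α → Prop
  | .atom a  => P a
  | .top     => True
  | .bot     => True
  | .and A B => A.AtomsIn P ∧ B.AtomsIn P
  | .or A B  => A.AtomsIn P ∧ B.AtomsIn P
  | .imp A B => A.AtomsIn P ∧ B.AtomsIn P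
  | .box A   => A.AtomsIn P
  | .dia A   => A.AtomsIn P

/-- No `◇` occurs in the formula. -/
def Fml.DiaFree : Fml α → Prop
  | .atom _  => True
  | .top     => True
  | .bot     => True
  | .and A B => A.DiaFree ∧ B.DiaFree
  | .or A B  => A.DiaFree ∧ B.DiaFree
  | .imp A B => A.DiaFree ∧ B.DiaFree
  | .box A   => A.DiaFree
  | .dia _   => False

/-- No `□` occurs in the formula. -/
def Fml.BoxFree : Fml α → Prop
  | .atom _  => True
  | .top     => True
  | .bot     => True
  | .and A B => A.BoxFree ∧ B.BoxFree
  | .or A B  => A.BoxFree ∧ B.BoxFree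
  | .imp A B => A.BoxFree ∧ B.BoxFree
  | .box _   => False
  | .dia A   => A.BoxFree

/-- The formula is modality-free (propositional). -/
def Fml.ModFree : Fml α → Prop
  | .atom _  => True
  | .top     => True
  | .bot     => True
  | .and A B => A.ModFree ∧ B.ModFree
  | .or A B  => A.ModFree ∧ B.ModFree
  | .imp A B => A.ModFree ∧ B.ModFree
  | .box _   => False
  | .dia _   => False

/-- An angling of the language: an injection `φ ↦ ⟨φ⟩` from formulas into the
atoms whose image (the angled atoms) is disjoint from a fixed infinite set of
plain atoms. -/
structure Angling (α : Type) where
  angle : Fml α → α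
  plain : Set α
  inj : Function.Injective angle
  plain_infinite : plain.Infinite
  disjoint : ∀ φ : Fml α, angle φ ∉ plain

/-- `a` is an angled atom. -/
def Angling.Angled (S : Angling α) (a : α) : Prop := ∃ φ : Fml α, S.angle φ = a

/-- The translation `t`: `⊥^t = ⊥`, `p^t = ⟨p⟩`, `⊤^t = ⟨⊤⟩`,
`(A ∘ B)^t = (A^t ∘ B^t) ∧ ⟨A ∘ B⟩` and `(○A)^t = (○A^t) ∧ ⟨○A⟩`. -/
def Angling.tr (S : Angling α) : Fml α → Fml α
  | .atom a  => .atom (S.angle (.atom a))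
  | .top     => .atom (S.angle .top)
  | .bot     => .bot
  | .and A B => .and (.and (S.tr A) (S.tr B)) (.atom (S.angle (.and A B)))
  | .or A B  => .and (.or (S.tr A) (S.tr B)) (.atom (S.angle (.or A B)))
  | .imp A B => .and (.imp (S.tr A) (S.tr B)) (.atom (S.angle (.imp A B)))
  | .box A   => .and (.box (S.tr A)) (.atom (S.angle (.box A)))
  | .dia A   => .and (.dia (S.tr A)) (.atom (S.angle (.dia A)))

/-- Action of the standard substitution on atoms: an angled atom `⟨φ⟩` is sent
to `φ`; plain atoms are fixed. -/
noncomputable def Angling.stdAtom (S : Angling α) (a : α) : Fml α :=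
  haveI := Classical.propDecidable (∃ φ : Fml α, S.angle φ = a)
  if h : ∃ φ : Fml α, S.angle φ = a then h.choose else .atom a

/-- The standard substitution `s`: replaces each angled atom `⟨φ⟩` by `φ`,
fixes the plain atoms, and commutes with all connectives. -/
noncomputable def Angling.std (S : Angling α) : Fml α → Fml α :=
  Fml.subst S.stdAtom

/-- The Visser–Harrop property of a calculus. -/
def VisserHarrop (R : RuleSet α) : Prop :=
  ∀ (Γ : Multiset (Fml α)), (∀ A ∈ Γ, Harrop A) →
  ∀ (AB : List (Fml α × Fml α)) (C D : Fml α),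
    Derives R (Γ + imps AB) (some (.or C D)) →
    Derives R (Γ + imps AB) (some C) ∨
    Derives R (Γ + imps AB) (some D) ∨
    ∃ p ∈ AB, Derives R (Γ + imps AB) (some p.1)

/-- The disjunction property of a calculus. -/
def DisjProp (R : RuleSet α) : Prop :=
  ∀ C D : Fml α, Derives R 0 (some (.or C D)) →
    Derives R 0 (some C) ∨ Derives R 0 (some D)

/-- The formula interpretation `I(Γ ⇒ Δ) = ⋀Γ → ⋁Δ` belongs to `L` (stated for
every enumeration of the antecedent multiset as a list). -/
def interpIn (L : Set (Fml α)) (s : Seq α) : Prop :=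
  ∀ l : List (Fml α), (↑l : Multiset (Fml α)) = s.1 → Fml.imp (conj l) (odisj s.2) ∈ L

/- Named modal axioms (with `p := atom 0`, `q := atom 1`). -/
def axTa : Fml ℕ := .imp (.box (.atom 0)) (.atom 0)
def axTb : Fml ℕ := .imp (.atom 0) (.dia (.atom 0))
def axBa : Fml ℕ := .imp (.dia (.box (.atom 0))) (.atom 0)
def axBb : Fml ℕ := .imp (.atom 0) (.box (.dia (.atom 0)))
def ax4a : Fml ℕ := .imp (.box (.atom 0)) (.box (.box (.atom 0)))
def ax4b : Fml ℕ := .imp (.dia (.dia (.atom 0))) (.dia (.atom 0))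
def ax5a : Fml ℕ := .imp (.dia (.box (.atom 0))) (.box (.atom 0))
def ax5b : Fml ℕ := .imp (.dia (.atom 0)) (.box (.dia (.atom 0)))
def axDiaBot : Fml ℕ := .imp (.dia .bot) .bot
def axDiaOr : Fml ℕ :=
  .imp (.dia (.or (.atom 0) (.atom 1))) (.or (.dia (.atom 0)) (.dia (.atom 1)))
def axBoxImp : Fml ℕ :=
  .imp (.imp (.dia (.atom 0)) (.box (.atom 1))) (.box (.imp (.atom 0) (.atom 1)))

/-- The axioms of `X ⊆ {T, B, 4, 5}` in both their `a`- and `b`-versions. -/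
def XAxioms (tT tB t4 t5 : Bool) : Set (Fml ℕ) :=
  (if tT then ({axTa, axTb} : Set (Fml ℕ)) else ∅) ∪
  (if tB then ({axBa, axBb} : Set (Fml ℕ)) else ∅) ∪
  (if t4 then ({ax4a, ax4b} : Set (Fml ℕ)) else ∅) ∪
  (if t5 then ({ax5a, ax5b} : Set (Fml ℕ)) else ∅)

/-- The additional axioms of `IK` over `CK`. -/
def IKExtra : Set (Fml ℕ) := {axDiaBot, axDiaOr, axBoxImp}

/-- The right rule with premises `{Γ, φ̄_i ⇒ ψ̄_i}_{i∈I}` and conclusion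
`Γ, θ̄ ⇒ η̄`, closed under all substitutions of formulas for atoms and
multisets for the context `Γ`. -/
def rightRuleInst (prems : List (List (Fml α) × Option (Fml α)))
    (θ : List (Fml α)) (η : Option (Fml α)) : RuleSet α := fun ps c =>
  ∃ (σ : α → Fml α) (Γ : Multiset (Fml α)),
    ps = prems.map (fun pr =>
        ((Γ + ↑(pr.1.map (Fml.subst σ)) : Multiset (Fml α)), pr.2.map (Fml.subst σ))) ∧
    c = ((Γ + ↑(θ.map (Fml.subst σ)) : Multiset (Fml α)), η.map (Fml.subst σ))

/-- The left rule with premises `{Γ, φ̄_i ⇒ ψ̄_i}_{i∈I} ∪ {Γ, θ̄_j ⇒ Δ}_{j∈J}`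
and conclusion `Γ, η̄ ⇒ Δ`, closed under all substitutions of formulas for
atoms and multisets for `Γ` and `Δ`. -/
def leftRuleInst (prems : List (List (Fml α) × Option (Fml α)))
    (lefts : List (List (Fml α))) (η : List (Fml α)) : RuleSet α := fun ps c =>
  ∃ (σ : α → Fml α) (Γ : Multiset (Fml α)) (Δ : Option (Fml α)),
    ps = prems.map (fun pr =>
          ((Γ + ↑(pr.1.map (Fml.subst σ)) : Multiset (Fml α)), pr.2.map (Fml.subst σ)))
        ++ lefts.map (fun θj => ((Γ + ↑(θj.map (Fml.subst σ)) : Multiset (Fml α)), Δ)) ∧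
    c = ((Γ + ↑(η.map (Fml.subst σ)) : Multiset (Fml α)), Δ)

/-- The formula `Ax_R` of a right rule. -/
def AxRight (prems : List (List (Fml α) × Option (Fml α)))
    (θ : List (Fml α)) (η : Option (Fml α)) : Fml α :=
  .imp (.and (conj (prems.map fun pr => .imp (conj pr.1) (odisj pr.2))) (conj θ)) (odisj η)

/-- The formula `Ax_R` of a left rule. -/
def AxLeft (prems : List (List (Fml α) × Option (Fml α)))
    (lefts : List (List (Fml α))) (η : List (Fml α)) : Fml α :=
  .imp (.and (conj (prems.map fun pr => .imp (conj pr.1) (odisj pr.2))) (conj η))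
    (disj (lefts.map conj))

/-- The forgetful translation `f_i`: fixes atoms, `⊤`, `⊥`, commutes with
`∧`, `∨`, `→`, `□`, and sends every `◇A` to `⊥`. -/
def fi : Fml α → Fml α
  | .atom a  => .atom a
  | .top     => .top
  | .bot     => .bot
  | .and A B => .and (fi A) (fi B)
  | .or A B  => .or (fi A) (fi B)
  | .imp A B => .imp (fi A) (fi B)
  | .box A   => .box (fi A)
  | .dia _   => .bot

/-- The forgetful translation `f_r`: fixes atoms, `⊤`, `⊥`, commutes with
`∧`, `∨`, `→`, `□`, and sends `◇A` to `f_r A`. -/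
def fr : Fml α → Fml α
  | .atom a  => .atom a
  | .top     => .top
  | .bot     => .bot
  | .and A B => .and (fr A) (fr B)
  | .or A B  => .or (fr A) (fr B)
  | .imp A B => .imp (fr A) (fr B)
  | .box A   => .box (fr A)
  | .dia A   => fr A

/-! `Ax_R` is the formula interpretation of the rule `R`. In `LJ + R` it is proved by applying
`R` in the context `⋀ᵢ(⋀φ̄ᵢ → ⋁ψ̄ᵢ)`, where every premise follows from its conjunct by modus
ponens. Conversely, in `LJ + Ax_R` the conclusion of an instance of `R` follows by cutting on
the matching instance of `Ax_R`: its antecedent is obtained from the premises by `→R`.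
Part (iii) is an unfolding of the three syntactic classes, using that no implication is basic. -/

def ExtendsLJ (R : RuleSet α) : Prop := ∀ ⦃ps : List (Seq α)⦄ ⦃c : Seq α⦄, LJRule ps c → R ps c

namespace Derives

variable {R : RuleSet α} {Γ Γ' : Multiset (Fml α)} {Δ : Option (Fml α)} {A B : Fml α}

lemma of_rule₀ (hr : R [] (Γ, Δ)) : Derives R Γ Δ :=
  step hr (by simp)

lemma of_rule₁ {Γ₁ : Multiset (Fml α)} {Δ₁ : Option (Fml α)}
    (hr : R [(Γ₁, Δ₁)] (Γ, Δ)) (h₁ : Derives R Γ₁ Δ₁) : Derives R Γ Δ :=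
  step hr (by simpa using h₁)

lemma of_rule₂ {Γ₁ Γ₂ : Multiset (Fml α)} {Δ₁ Δ₂ : Option (Fml α)}
    (hr : R [(Γ₁, Δ₁), (Γ₂, Δ₂)] (Γ, Δ)) (h₁ : Derives R Γ₁ Δ₁) (h₂ : Derives R Γ₂ Δ₂) :
    Derives R Γ Δ :=
  step hr (by simpa using ⟨h₁, h₂⟩)

variable (hR : ExtendsLJ R)
include hR

lemma of_mem (h : A ∈ Γ) : Derives R Γ (some A) := by
  obtain ⟨Γ, rfl⟩ := Multiset.exists_cons_of_mem h
  exact of_rule₀ (hR (.id Γ A))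

lemma weaken_add (S : Multiset (Fml α)) (h : Derives R Γ Δ) : Derives R (S + Γ) Δ := by
  induction S using Multiset.induction with
  | empty => simpa using h
  | cons A S ih => rw [Multiset.cons_add]; exact of_rule₁ (hR (.wL A _ Δ)) ih

lemma weaken_of_le (hle : Γ ≤ Γ') (h : Derives R Γ Δ) : Derives R Γ' Δ := by
  obtain ⟨S, rfl⟩ := Multiset.le_iff_exists_add.mp hle
  rw [add_comm]
  exact weaken_add hR S h

lemma and_left (h : Derives R (A ::ₘ B ::ₘ Γ) Δ) : Derives R (.and A B ::ₘ Γ) Δ := by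
  have hB : Derives R (.and A B ::ₘ A ::ₘ Γ) Δ :=
    of_rule₁ (hR (.andL₂ A B _ Δ)) (by rwa [Multiset.cons_swap])
  have hAB : Derives R (.and A B ::ₘ .and A B ::ₘ Γ) Δ :=
    of_rule₁ (hR (.andL₁ A B _ Δ)) (by rwa [Multiset.cons_swap])
  exact of_rule₁ (hR (.cL _ Γ Δ)) hAB

lemma conj_left :
    ∀ (l : List (Fml α)) {Γ}, Derives R (↑l + Γ) Δ → Derives R (conj l ::ₘ Γ) Δ
  | [], Γ, h => of_rule₁ (hR (.wL _ Γ Δ)) (by simpa using h)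
  | [A], _, h => by simpa [conj] using h
  | A :: B :: l, _, h => by
    refine and_left hR ?_
    rw [Multiset.cons_swap]
    refine conj_left (B :: l) ?_
    rwa [Multiset.add_cons, ← Multiset.cons_add, Multiset.cons_coe]

lemma conj_left_of_mem :
    ∀ l : List (Fml α), A ∈ l → Derives R (A ::ₘ Γ) Δ → Derives R (conj l ::ₘ Γ) Δ
  | [], hA, _ => absurd hA List.not_mem_nil
  | [B], hA, h => by rw [List.mem_singleton] at hA; subst hA; exact h
  | B :: C :: l, hA, h => by
    rcases List.mem_cons.mp hA with rfl | hA
    · exact of_rule₁ (hR (.andL₁ A _ Γ Δ)) h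
    · exact of_rule₁ (hR (.andL₂ B _ Γ Δ)) (conj_left_of_mem (C :: l) hA h)

lemma conj_right :
    ∀ l : List (Fml α), (∀ A ∈ l, Derives R Γ (some A)) → Derives R Γ (some (conj l))
  | [], _ => of_rule₀ (hR (.topR Γ))
  | [A], h => h A (List.mem_singleton_self A)
  | A :: B :: l, h =>
    of_rule₂ (hR (.andR A _ Γ)) (h A (by simp))
      (conj_right (B :: l) fun C hC => h C (List.mem_cons_of_mem A hC))

lemma odisj_right (h : Derives R Γ Δ) : Derives R Γ (some (odisj Δ)) := by
  cases Δ with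
  | none => exact of_rule₁ (hR (.wR _ Γ)) h
  | some B => exact h

lemma odisj_left : Derives R (odisj Δ ::ₘ Γ) Δ := by
  cases Δ with
  | none => exact of_rule₀ (hR (.botL Γ none))
  | some B => exact of_mem hR (Multiset.mem_cons_self B Γ)

lemma imp_conj_odisj (l : List (Fml α)) (h : Derives R (↑l + Γ) Δ) :
    Derives R Γ (some (.imp (conj l) (odisj Δ))) :=
  of_rule₁ (hR (.impR _ _ Γ)) (odisj_right hR (conj_left hR l h))

lemma of_imp_conj_odisj (l : List (Fml α)) (h : Derives R Γ (some (.imp (conj l) (odisj Δ))))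
    (hl : ∀ A ∈ l, Derives R Γ (some A)) : Derives R Γ Δ :=
  of_rule₂ (hR (.cut _ Γ Δ)) h
    (of_rule₂ (hR (.impL _ _ Γ Δ)) (conj_right hR l hl) (odisj_left hR))

end Derives

lemma Fml.subst_atom : ∀ A : Fml α, A.subst Fml.atom = A
  | .atom _ => rfl
  | .top => rfl
  | .bot => rfl
  | .and A B | .or A B | .imp A B => by simp only [Fml.subst, Fml.subst_atom A, Fml.subst_atom B]
  | .box A | .dia A => by simp only [Fml.subst, Fml.subst_atom A]

@[simp]
lemma Fml.subst_atom_eq_id : Fml.subst (Fml.atom : α → Fml α) = id :=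
  funext Fml.subst_atom

lemma Fml.subst_conj (σ : β → Fml α) : ∀ l : List (Fml β),
    (conj l).subst σ = conj (l.map (Fml.subst σ))
  | [] | [_] => rfl
  | A :: B :: l => congrArg (Fml.and (A.subst σ)) (Fml.subst_conj σ (B :: l))

lemma Fml.subst_odisj (σ : β → Fml α) (Δ : Option (Fml β)) :
    (odisj Δ).subst σ = odisj (Δ.map (Fml.subst σ)) := by
  cases Δ <;> rfl

lemma Fml.subst_axRight (σ : β → Fml α) (prems : List (List (Fml β) × Option (Fml β)))
    (θ : List (Fml β)) (η : Option (Fml β)) :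
    (AxRight prems θ η).subst σ =
      AxRight (prems.map fun pr => (pr.1.map (Fml.subst σ), pr.2.map (Fml.subst σ)))
        (θ.map (Fml.subst σ)) (η.map (Fml.subst σ)) := by
  simp [AxRight, Fml.subst, Fml.subst_conj, Fml.subst_odisj, Function.comp_def]

lemma rightRuleInst_atom (prems : List (List (Fml α) × Option (Fml α))) (θ : List (Fml α))
    (η : Option (Fml α)) (Γ : Multiset (Fml α)) :
    rightRuleInst prems θ η (prems.map fun pr => (Γ + ↑pr.1, pr.2)) (Γ + ↑θ, η) :=
  ⟨Fml.atom, Γ, by simp, by simp⟩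

def premsConj (prems : List (List (Fml α) × Option (Fml α))) : Fml α :=
  conj (prems.map fun pr => .imp (conj pr.1) (odisj pr.2))

lemma axRight_eq_imp_conj (prems : List (List (Fml α) × Option (Fml α))) (θ : List (Fml α))
    (η : Option (Fml α)) : AxRight prems θ η = .imp (conj [premsConj prems, conj θ]) (odisj η) :=
  rfl

section AxRight

variable {R : RuleSet α} {prems : List (List (Fml α) × Option (Fml α))} {θ : List (Fml α)}
  {η : Option (Fml α)}

theorem derives_axRight_of_rightRuleInst (hR : ExtendsLJ R)
    (hrule : ∀ ps c, rightRuleInst prems θ η ps c → R ps c) :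
    Derives R 0 (some (AxRight prems θ η)) := by
  rw [axRight_eq_imp_conj]
  refine Derives.imp_conj_odisj hR _ ?_
  show Derives R (premsConj prems ::ₘ conj θ ::ₘ 0) η
  rw [Multiset.cons_swap]
  refine Derives.conj_left hR θ ?_
  rw [add_comm, ← Multiset.singleton_add]
  refine Derives.step (hrule _ _ (rightRuleInst_atom prems θ η {premsConj prems})) ?_
  simp only [List.mem_map, forall_exists_index, and_imp, forall_apply_eq_imp_iff₂]
  intro pr hpr
  rw [Multiset.singleton_add]
  refine Derives.conj_left_of_mem hR _ (List.mem_map_of_mem hpr) ?_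
  exact Derives.of_imp_conj_odisj hR pr.1 (Derives.of_mem hR (Multiset.mem_cons_self _ _))
    fun A hA => Derives.of_mem hR (Multiset.mem_cons_of_mem (Multiset.mem_coe.2 hA))

theorem Derives.of_axRight (hR : ExtendsLJ R) {Γ : Multiset (Fml α)}
    (hax : Derives R 0 (some (AxRight prems θ η)))
    (hprems : ∀ pr ∈ prems, Derives R (Γ + ↑pr.1) pr.2) : Derives R (Γ + ↑θ) η := by
  rw [axRight_eq_imp_conj] at hax
  refine of_imp_conj_odisj hR _ (by simpa using weaken_add hR (Γ + ↑θ) hax) ?_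
  simp only [List.mem_cons, List.not_mem_nil, or_false, forall_eq_or_imp, forall_eq]
  refine ⟨conj_right hR _ ?_, conj_right hR θ fun A hA => of_mem hR ?_⟩
  · simp only [List.mem_map, forall_exists_index, and_imp, forall_apply_eq_imp_iff₂]
    intro pr hpr
    refine imp_conj_odisj hR pr.1 (weaken_of_le hR ?_ (hprems pr hpr))
    rw [add_comm]
    exact add_le_add_right (Multiset.le_add_right _ _) _
  · exact Multiset.mem_add.2 (Or.inr (Multiset.mem_coe.2 hA))

end AxRight

section Classes

lemma conj_iff_forall_mem {P : Fml α → Prop} (htop : P .top)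
    (hand : ∀ A B, P (.and A B) ↔ P A ∧ P B) : ∀ l : List (Fml α), P (conj l) ↔ ∀ A ∈ l, P A
  | [] => by simpa [conj] using htop
  | [A] => by simp [conj]
  | A :: B :: l => by
    rw [List.forall_mem_cons, ← conj_iff_forall_mem htop hand (B :: l)]
    exact hand A _

lemma odisj_iff_forall_mem {P : Fml α → Prop} (hbot : P .bot) (Δ : Option (Fml α)) :
    P (odisj Δ) ↔ ∀ B ∈ Δ, P B := by
  cases Δ
  · simpa [odisj] using hbot
  · simp [odisj]

lemma not_basic_imp (A B : Fml α) : ¬Basic (.imp A B) := nofun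

lemma basic_and_iff {A B : Fml α} : Basic (.and A B) ↔ Basic A ∧ Basic B :=
  ⟨fun | .and hA hB => ⟨hA, hB⟩, fun ⟨hA, hB⟩ => .and hA hB⟩

lemma almostPos_and_iff {A B : Fml α} : AlmostPos (.and A B) ↔ AlmostPos A ∧ AlmostPos B :=
  ⟨fun | .basic (.and hA hB) => ⟨.basic hA, .basic hB⟩ | .and hA hB => ⟨hA, hB⟩,
    fun ⟨hA, hB⟩ => .and hA hB⟩

lemma almostPos_imp_iff {A B : Fml α} : AlmostPos (.imp A B) ↔ Basic A ∧ AlmostPos B :=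
  ⟨fun | .basic h => (not_basic_imp A B h).elim | .imp hA hB => ⟨hA, hB⟩,
    fun ⟨hA, hB⟩ => .imp hA hB⟩

lemma constructive_imp_iff {A B : Fml α} :
    Constructive (.imp A B) ↔ AlmostPos A ∧ Constructive B :=
  ⟨fun | .basic h => (not_basic_imp A B h).elim | .imp hA hB => ⟨hA, hB⟩,
    fun ⟨hA, hB⟩ => .imp hA hB⟩

theorem constructive_axRight_iff (prems : List (List (Fml α) × Option (Fml α)))
    (θ : List (Fml α)) (η : Option (Fml α)) :
    Constructive (AxRight prems θ η) ↔
      ((∀ pr ∈ prems, (∀ A ∈ pr.1, Basic A) ∧ (∀ B ∈ pr.2, AlmostPos B)) ∧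
       (∀ A ∈ θ, AlmostPos A) ∧ (∀ B ∈ η, Constructive B)) := by
  have hbasic := conj_iff_forall_mem (Basic.top (α := α)) fun _ _ => basic_and_iff
  have hap := conj_iff_forall_mem (AlmostPos.basic (Basic.top (α := α))) fun _ _ =>
    almostPos_and_iff
  rw [AxRight, constructive_imp_iff, almostPos_and_iff, hap, hap,
    odisj_iff_forall_mem (Constructive.basic .bot)]
  simp only [List.forall_mem_map, almostPos_imp_iff, hbasic,
    odisj_iff_forall_mem (AlmostPos.basic .bot), and_assoc]

end Classes

/-- the axiom `Ax_R` of a right rule `R`: (i) `⇒ Ax_R` is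
provable in `LJ + R`; (ii) `R` is derivable (from its premises, as
assumptions) in `LJ + Ax_R`; (iii) `Ax_R` is constructive iff the components
of `R` are of the appropriate classes. -/
theorem statement_11 (prems : List (List (Fml ℕ) × Option (Fml ℕ)))
    (θ : List (Fml ℕ)) (η : Option (Fml ℕ)) :
    Derives (fun ps c => LJRule ps c ∨ rightRuleInst prems θ η ps c)
      0 (some (AxRight prems θ η)) ∧
    (∀ (σ : ℕ → Fml ℕ) (Γ : Multiset (Fml ℕ)),
      Derives (fun ps c => LJRule ps c ∨ axRule (· = AxRight prems θ η) ps c ∨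
          hypRule {s : Seq ℕ | ∃ pr ∈ prems,
            s = ((Γ + ↑(pr.1.map (Fml.subst σ)) : Multiset (Fml ℕ)),
                 pr.2.map (Fml.subst σ))} ps c)
        (Γ + ↑(θ.map (Fml.subst σ))) (η.map (Fml.subst σ))) ∧
    (Constructive (AxRight prems θ η) ↔
      ((∀ pr ∈ prems, (∀ A ∈ pr.1, Basic A) ∧ (∀ B ∈ pr.2, AlmostPos B)) ∧
       (∀ A ∈ θ, AlmostPos A) ∧ (∀ B ∈ η, Constructive B))) := by
  refine ⟨derives_axRight_of_rightRuleInst (fun _ _ => .inl) fun _ _ => .inr,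
    fun σ Γ => ?_, constructive_axRight_iff prems θ η⟩
  refine Derives.of_axRight
    (prems := prems.map fun pr => (pr.1.map (Fml.subst σ), pr.2.map (Fml.subst σ)))
    (fun _ _ => .inl) ?_ ?_
  · rw [← Fml.subst_axRight]
    exact Derives.of_rule₀ (.inr (.inl ⟨rfl, _, σ, rfl, rfl⟩))
  · simp only [List.forall_mem_map]
    exact fun pr hpr => Derives.of_rule₀ (.inr (.inr ⟨rfl, pr, hpr, rfl⟩))

end UPT
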